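/- Let η be a prime binary word of length k ≥ 1. Then lim_{n→∞} Σ(η^n)/n³ = k²/3, where Σ(w) = Σ_{ξ∈{0,1}^+} |w|_ξ². -/

import Mathlib

open Filter

def occ (w ξ : List Bool) : ℕ :=
  ((List.range w.length).filter (fun i => ξ.isPrefixOf (w.drop i))).length

def wpow (η : List Bool) (ℓ : ℕ) : List Bool := (List.replicate ℓ η).flatten

def kxSum (w : List Bool) : ℕ :=
  ∑ ξ ∈ w.sublists.toFinset.filter (fun ξ => ξ ≠ []), (occ w ξ) ^ 2

noncomputable def Lam (w : List Bool) : ℕ :=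
  sSup {m | ∃ η ℓ, η ≠ ([] : List Bool) ∧ 1 ≤ ℓ ∧ wpow η ℓ <:+: w ∧
    m = η.length ^ 2 * (ℓ + 1) ^ 3}

def IsPrimeWord (η : List Bool) : Prop :=
  η ≠ [] ∧ ∀ ζ ℓ, 2 ≤ ℓ → η ≠ wpow ζ ℓ

def occEnd (v ξ : List Bool) (m : ℕ) : ℕ :=
  ((List.range v.length).filter
    (fun i => ξ.isPrefixOf (v.drop i) && decide (v.length < i + ξ.length + m))).length

def pref (x : ℕ → Bool) (n : ℕ) : List Bool := (List.range n).map x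

/-!
Counting the triples `(ξ, i, j)` with `ξ` a nonempty common prefix of the suffixes `w[i:]` and
`w[j:]` gives `Σ(w) = ∑_{i,j} |lcp(w[i:], w[j:])|`. For `w = η^n` of length `N = kn`: if
`i ≡ j (mod k)` one suffix is a prefix of the other and the lcp is `N - max i j`; otherwise it is
shorter than `k`, because a common prefix of length `k` makes the periodic word `η^ω` `d`-periodic
for some `d ≢ 0 (mod k)`, hence `gcd d k`-periodic, and then `η` is a proper power. Writing
`i = ka + r`, `j = kb + s`, each lcp is within `k` of `[r = s] · k (n - max a b)`, so `Σ(η^n)`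
differs by at most `k³n²` from `k² ∑_{a,b<n} (n - max a b) = k² n(n+1)(2n+1)/6`.
-/

open Finset Function Topology

namespace List

variable {α : Type*} [DecidableEq α]

def commonPrefix : List α → List α → List α
  | a :: u, b :: v => if a = b then a :: commonPrefix u v else []
  | _, _ => []

theorem prefix_commonPrefix_iff {ξ u v : List α} :
    ξ <+: commonPrefix u v ↔ ξ <+: u ∧ ξ <+: v := by
  induction u generalizing ξ v with
  | nil => cases ξ <;> simp [commonPrefix]
  | cons a u ih =>
    cases v with
    | nil => cases ξ <;> simp [commonPrefix]
    | cons b v =>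
      cases ξ with
      | nil => simp
      | cons c ξ =>
        by_cases hab : a = b
        · subst hab
          simp only [commonPrefix, if_true, cons_prefix_cons, ih]
          tauto
        · simp only [commonPrefix, if_neg hab, cons_prefix_cons]
          grind

theorem commonPrefix_prefix_left (u v : List α) : commonPrefix u v <+: u :=
  (prefix_commonPrefix_iff.1 (prefix_refl _)).1

theorem commonPrefix_prefix_right (u v : List α) : commonPrefix u v <+: v :=
  (prefix_commonPrefix_iff.1 (prefix_refl _)).2

theorem commonPrefix_comm (u v : List α) : commonPrefix u v = commonPrefix v u :=
  antisymm (r := (· <+: ·))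
    (prefix_commonPrefix_iff.2 ⟨commonPrefix_prefix_right u v, commonPrefix_prefix_left u v⟩)
    (prefix_commonPrefix_iff.2 ⟨commonPrefix_prefix_right v u, commonPrefix_prefix_left v u⟩)

theorem commonPrefix_eq_of_prefix {u v : List α} (h : v <+: u) : commonPrefix u v = v :=
  antisymm (r := (· <+: ·)) (commonPrefix_prefix_right u v)
    (prefix_commonPrefix_iff.2 ⟨h, prefix_refl v⟩)

end List

namespace Function.Periodic

variable {α : Type*} {f : ℕ → α} {d k : ℕ}

theorem nat_gcd (hd : Periodic f d) (hk : Periodic f k) : Periodic f (d.gcd k) := by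
  rcases Nat.lt_or_ge (d.gcd k) k with hlt | hge
  · obtain ⟨m, -, hm⟩ := Nat.exists_mul_mod_eq_gcd hlt
    intro t
    calc f (t + d.gcd k) = f (t + d.gcd k + d * m / k * k) := (hk.nat_mul _ _).symm
      _ = f (t + m * d) := by rw [← hm, add_assoc, Nat.mod_add_div', mul_comm]
      _ = f t := hd.nat_mul m t
  · rcases Nat.eq_zero_or_pos k with rfl | hk0
    · simpa using hd
    · rwa [le_antisymm (Nat.gcd_le_right d hk0) hge]

theorem periodic_of_eq_shift_on_window (hk : Periodic f k) (hk0 : 0 < k) {i : ℕ}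
    (h : ∀ t < k, f (i + t) = f (i + d + t)) : Periodic f d := by
  have hshift : ∀ t, f (i + t) = f (i + d + t) := by
    intro t
    rw [← (hk.const_add i).map_mod_nat t, ← (hk.const_add (i + d)).map_mod_nat t]
    exact h _ (Nat.mod_lt t hk0)
  intro s
  have hik : i ≤ s + i * k := le_add_left (Nat.le_mul_of_pos_right i hk0)
  calc f (s + d) = f (s + d + i * k) := (hk.nat_mul i _).symm
    _ = f (i + d + (s + i * k - i)) := by congr 1; omega
    _ = f (i + (s + i * k - i)) := (hshift _).symm
    _ = f s := by simpa [Nat.add_sub_cancel' hik] using hk.nat_mul i s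

end Function.Periodic

namespace Finset

theorem sum_range_mul {M : Type*} [AddCommMonoid M] (f : ℕ → M) (k n : ℕ) :
    ∑ i ∈ range (k * n), f i = ∑ a ∈ range n, ∑ r ∈ range k, f (k * a + r) := by
  induction n with
  | zero => simp
  | succ n ih => rw [Nat.mul_succ, sum_range_add, ih, sum_range_succ]

theorem abs_sum_sub_sum_le {ι R : Type*} [AddCommGroup R] [LinearOrder R]
    [IsOrderedAddMonoid R] (s : Finset ι) {f g : ι → R} {C : R}
    (h : ∀ i ∈ s, |f i - g i| ≤ C) : |∑ i ∈ s, f i - ∑ i ∈ s, g i| ≤ #s • C := by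
  rw [← sum_sub_distrib]
  exact (abs_sum_le_sum_abs _ _).trans (sum_le_card_nsmul _ _ _ h)

end Finset

theorem card_filter_prefix_nonempty_sublists {w x : List Bool} (hx : x <:+: w) :
    ((w.sublists.toFinset.filter (fun ξ => ξ ≠ [])).filter (· <+: x)).card = x.length := by
  have himage : (w.sublists.toFinset.filter (fun ξ => ξ ≠ [])).filter (· <+: x) =
      (Icc 1 x.length).image x.take := by
    ext ξ
    simp only [mem_filter, mem_image, mem_Icc, List.mem_toFinset, List.mem_sublists]
    constructor
    · rintro ⟨⟨-, hne⟩, hξ⟩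
      exact ⟨ξ.length, ⟨List.length_pos_iff.2 hne, hξ.length_le⟩,
        (List.prefix_iff_eq_take.1 hξ).symm⟩
    · rintro ⟨m, ⟨hm1, hmx⟩, rfl⟩
      refine ⟨⟨((List.take_prefix m x).isInfix.trans hx).sublist, ?_⟩, List.take_prefix m x⟩
      rw [← List.length_pos_iff, List.length_take]
      omega
  rw [himage, card_image_of_injOn, Nat.card_Icc, Nat.add_sub_cancel]
  intro a ha b hb hab
  simp only [coe_Icc, Set.mem_Icc] at ha hb
  simpa [List.length_take, ha.2, hb.2] using congrArg List.length hab

theorem occ_eq_card (w ξ : List Bool) :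
    occ w ξ = ((range w.length).filter (fun i => ξ <+: w.drop i)).card := by
  simp [occ, Finset.filter, Finset.range, Multiset.range, Multiset.filter_coe,
    ← List.isPrefixOf_iff_prefix]

theorem kxSum_eq_sum_length_commonPrefix (w : List Bool) :
    kxSum w = ∑ i ∈ range w.length, ∑ j ∈ range w.length,
      (List.commonPrefix (w.drop i) (w.drop j)).length := by
  have hsq : ∀ ξ, occ w ξ ^ 2 = ∑ i ∈ range w.length, ∑ j ∈ range w.length,
      if ξ <+: List.commonPrefix (w.drop i) (w.drop j) then 1 else 0 := by
    intro ξ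
    simp only [occ_eq_card, sq, card_filter, sum_mul_sum, List.prefix_commonPrefix_iff,
      ite_zero_mul_ite_zero, mul_one]
  rw [kxSum, sum_congr rfl fun ξ _ => hsq ξ, sum_comm]
  refine sum_congr rfl fun i _ => ?_
  rw [sum_comm]
  refine sum_congr rfl fun j _ => ?_
  rw [← card_filter, card_filter_prefix_nonempty_sublists]
  exact (List.commonPrefix_prefix_left _ _).isInfix.trans (List.drop_suffix i w).isInfix

-- The infinite periodic word `η^ω` (constantly `false` for `η = []`).
def omegaPow (η : List Bool) (t : ℕ) : Bool := η.getD (t % η.length) false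

theorem periodic_omegaPow (η : List Bool) : Periodic (omegaPow η) η.length := by
  simp [Periodic, omegaPow]

theorem map_omegaPow_range_length (η : List Bool) :
    (List.range η.length).map (omegaPow η) = η :=
  List.ext_getElem (by simp) fun t _ ht => by
    simp [omegaPow, Nat.mod_eq_of_lt ht, List.getElem?_eq_getElem ht]

theorem length_wpow (η : List Bool) (n : ℕ) : (wpow η n).length = η.length * n := by
  simp [wpow, List.length_flatten, mul_comm]

theorem wpow_eq_map_omegaPow (η : List Bool) (n : ℕ) :
    wpow η n = (List.range (η.length * n)).map (omegaPow η) := by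
  induction n with
  | zero => simp [wpow]
  | succ n ih =>
    rw [wpow, List.replicate_succ', List.flatten_append, ← wpow, ih, Nat.mul_succ,
      List.range_add, List.map_append, List.map_map, List.flatten_singleton]
    congr 1
    refine (map_omegaPow_range_length η).symm.trans (List.map_congr_left fun t _ => ?_)
    simpa [add_comm, mul_comm] using ((periodic_omegaPow η).nat_mul n t).symm

theorem getElem_drop_wpow (η : List Bool) (n i t : ℕ) (ht : t < ((wpow η n).drop i).length) :
    ((wpow η n).drop i)[t] = omegaPow η (i + t) := by
  simp [List.getElem_drop, wpow_eq_map_omegaPow]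

theorem IsPrimeWord.not_periodic_omegaPow {η : List Bool} (hη : IsPrimeWord η) {g : ℕ}
    (hg : g ∣ η.length) (hlt : g < η.length) : ¬ Periodic (omegaPow η) g := by
  intro hper
  obtain ⟨ℓ, hℓ⟩ := hg
  have hk0 : 0 < η.length := List.length_pos_iff.2 hη.1
  have hg0 : 0 < g := Nat.pos_of_mul_pos_right (hℓ ▸ hk0)
  have hℓ2 : 2 ≤ ℓ := by
    by_contra! h
    interval_cases ℓ <;> omega
  refine hη.2 (η.take g) ℓ hℓ2 ?_
  have hlen : (η.take g).length = g := by rw [List.length_take]; omega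
  calc η = (List.range η.length).map (omegaPow η) := (map_omegaPow_range_length η).symm
    _ = (List.range (g * ℓ)).map (omegaPow (η.take g)) := by
        rw [← hℓ]
        refine List.map_congr_left fun t _ => ?_
        rw [← hper.map_mod_nat t]
        have htg : t % g < g := Nat.mod_lt t hg0
        simp [omegaPow, hlen, Nat.mod_eq_of_lt (htg.trans hlt), List.getElem?_take_of_lt htg]
    _ = wpow (η.take g) ℓ := by rw [wpow_eq_map_omegaPow, hlen]

theorem drop_wpow_prefix_drop_wpow {η : List Bool} (n : ℕ) {i j : ℕ} (hij : i ≤ j)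
    (hmod : i ≡ j [MOD η.length]) : (wpow η n).drop j <+: (wpow η n).drop i := by
  refine List.prefix_iff_getElem.2 ⟨by simp only [List.length_drop]; omega, fun t ht => ?_⟩
  rw [getElem_drop_wpow, getElem_drop_wpow, ← (periodic_omegaPow η).map_mod_nat,
    ← (periodic_omegaPow η).map_mod_nat (i + t)]
  exact congrArg _ (hmod.add_right t).symm

theorem length_commonPrefix_drop_wpow_of_modEq (η : List Bool) (n : ℕ) {i j : ℕ}
    (hmod : i ≡ j [MOD η.length]) :
    (List.commonPrefix ((wpow η n).drop i) ((wpow η n).drop j)).length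
      = η.length * n - max i j := by
  rcases le_total i j with hij | hji
  · rw [List.commonPrefix_eq_of_prefix (drop_wpow_prefix_drop_wpow n hij hmod),
      List.length_drop, length_wpow, max_eq_right hij]
  · rw [List.commonPrefix_comm, List.commonPrefix_eq_of_prefix
      (drop_wpow_prefix_drop_wpow n hji hmod.symm), List.length_drop, length_wpow,
      max_eq_left hji]

theorem IsPrimeWord.length_commonPrefix_drop_wpow_lt {η : List Bool} (hη : IsPrimeWord η)
    (n : ℕ) {i j : ℕ} (hmod : ¬ i ≡ j [MOD η.length]) :
    (List.commonPrefix ((wpow η n).drop i) ((wpow η n).drop j)).length < η.length := by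
  wlog hij : i ≤ j generalizing i j
  · rw [List.commonPrefix_comm]
    exact this (fun h => hmod h.symm) (le_of_not_ge hij)
  obtain ⟨d, rfl⟩ := Nat.exists_eq_add_of_le hij
  have hk0 : 0 < η.length := List.length_pos_iff.2 hη.1
  have hd : ¬ η.length ∣ d := by
    rwa [Nat.modEq_iff_dvd' hij, Nat.add_sub_cancel_left] at hmod
  by_contra! hlong
  set u := (wpow η n).drop i
  set v := (wpow η n).drop (i + d)
  have hu := List.commonPrefix_prefix_left u v
  have hv := List.commonPrefix_prefix_right u v
  have hshift : ∀ t < η.length, omegaPow η (i + t) = omegaPow η (i + d + t) := by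
    intro t ht
    have htc : t < (List.commonPrefix u v).length := ht.trans_le hlong
    rw [← getElem_drop_wpow η n i t (htc.trans_le hu.length_le),
      ← getElem_drop_wpow η n (i + d) t (htc.trans_le hv.length_le), ← hu.getElem htc,
      ← hv.getElem htc]
  have hgcd := ((periodic_omegaPow η).periodic_of_eq_shift_on_window hk0 hshift).nat_gcd
    (periodic_omegaPow η)
  refine hη.not_periodic_omegaPow (Nat.gcd_dvd_right d _) ?_ hgcd
  refine lt_of_le_of_ne (Nat.gcd_le_right d hk0) fun h => hd ?_
  exact h ▸ Nat.gcd_dvd_left d η.length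

theorem kxSum_wpow_eq_sum (η : List Bool) (n : ℕ) :
    kxSum (wpow η n) =
      ∑ a ∈ range n, ∑ r ∈ range η.length, ∑ b ∈ range n, ∑ s ∈ range η.length,
      (List.commonPrefix ((wpow η n).drop (η.length * a + r))
        ((wpow η n).drop (η.length * b + s))).length := by
  rw [kxSum_eq_sum_length_commonPrefix, length_wpow, sum_range_mul]
  exact sum_congr rfl fun a _ => sum_congr rfl fun r _ => sum_range_mul _ _ _

theorem IsPrimeWord.abs_length_commonPrefix_drop_wpow_sub_le {η : List Bool} (hη : IsPrimeWord η)
    {n a b r s : ℕ} (ha : a < n) (hb : b < n) (hr : r < η.length) (hs : s < η.length) :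
    |((List.commonPrefix ((wpow η n).drop (η.length * a + r))
        ((wpow η n).drop (η.length * b + s))).length : ℝ)
      - ((if r = s then η.length * (n - max a b) else 0 : ℕ) : ℝ)| ≤ η.length := by
  by_cases hrs : r = s
  · subst hrs
    have hmod : η.length * a + r ≡ η.length * b + r [MOD η.length] := by simp [Nat.ModEq]
    rw [if_pos rfl, length_commonPrefix_drop_wpow_of_modEq η n hmod, max_add_add_right,
      Nat.mul_max_mul_left]
    have hkm : η.length * max a b + η.length ≤ η.length * n := by
      simpa [Nat.mul_succ] using Nat.mul_le_mul_left η.length (max_lt ha hb : max a b < n)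
    rw [Nat.mul_sub, abs_sub_le_iff, sub_le_iff_le_add, sub_le_iff_le_add]
    constructor <;> norm_cast <;> omega
  · have hmod : ¬ η.length * a + r ≡ η.length * b + s [MOD η.length] := by
      simpa [Nat.ModEq, Nat.mod_eq_of_lt hr, Nat.mod_eq_of_lt hs] using hrs
    rw [if_neg hrs, Nat.cast_zero, sub_zero, abs_of_nonneg (Nat.cast_nonneg _)]
    exact_mod_cast (hη.length_commonPrefix_drop_wpow_lt n hmod).le

theorem sum_ite_eq_sq_mul_sum_sub_max (k n : ℕ) :
    ∑ a ∈ range n, ∑ r ∈ range k, ∑ b ∈ range n, ∑ s ∈ range k,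
      (if r = s then k * (n - max a b) else 0)
      = k ^ 2 * ∑ a ∈ range n, ∑ b ∈ range n, (n - max a b) := by
  rw [sum_congr rfl fun a _ => sum_congr rfl fun r hr => sum_congr rfl fun b _ =>
    sum_ite_eq_of_mem (range k) r _ hr]
  simp [mul_sum, sq, mul_assoc]

theorem sum_sub_max_succ (n : ℕ) :
    ∑ a ∈ range (n + 1), ∑ b ∈ range (n + 1), (n + 1 - max a b)
      = ∑ a ∈ range n, ∑ b ∈ range n, (n - max a b) + (n + 1) ^ 2 := by
  have hrow : ∀ a ∈ range n, ∑ b ∈ range (n + 1), (n + 1 - max a b)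
      = ∑ b ∈ range n, (n - max a b) + (n + 1) := by
    intro a ha
    have ha := mem_range.1 ha
    rw [sum_range_succ, max_eq_right ha.le, Nat.add_sub_cancel_left,
      sum_congr rfl fun b hb => show n + 1 - max a b = n - max a b + 1 by
        have := mem_range.1 hb; omega]
    simp [sum_add_distrib, add_assoc]
  have hlast : ∑ b ∈ range (n + 1), (n + 1 - max n b) = n + 1 := by
    rw [sum_congr rfl fun b hb => show n + 1 - max n b = 1 by have := mem_range.1 hb; omega]
    simp
  rw [sum_range_succ, hlast, sum_congr rfl hrow, sum_add_distrib, sum_const, card_range]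
  simp only [smul_eq_mul]
  ring

theorem six_mul_sum_sub_max (n : ℕ) :
    6 * ∑ a ∈ range n, ∑ b ∈ range n, (n - max a b) = n * (n + 1) * (2 * n + 1) := by
  induction n with
  | zero => simp
  | succ n ih => rw [sum_sub_max_succ, mul_add, ih]; ring

theorem IsPrimeWord.abs_kxSum_wpow_sub_le {η : List Bool} (hη : IsPrimeWord η) (n : ℕ) :
    |(kxSum (wpow η n) : ℝ)
      - (η.length : ℝ) ^ 2 * ((∑ a ∈ range n, ∑ b ∈ range n, (n - max a b) : ℕ) : ℝ)|
      ≤ (η.length : ℝ) ^ 3 * n ^ 2 := by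
  have h := abs_sum_sub_sum_le (range n) fun a ha =>
    abs_sum_sub_sum_le (range η.length) fun r hr =>
    abs_sum_sub_sum_le (range n) fun b hb =>
    abs_sum_sub_sum_le (range η.length) fun s hs =>
      hη.abs_length_commonPrefix_drop_wpow_sub_le (mem_range.1 ha) (mem_range.1 hb)
        (mem_range.1 hr) (mem_range.1 hs)
  rw [kxSum_wpow_eq_sum, ← Nat.cast_pow, ← Nat.cast_mul, ← sum_ite_eq_sq_mul_sum_sub_max]
  simp only [Nat.cast_sum]
  refine h.trans_eq ?_
  simp only [card_range, nsmul_eq_mul]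
  ring

theorem tendsto_sum_sub_max_div_cube :
    Tendsto (fun n : ℕ => ((∑ a ∈ range n, ∑ b ∈ range n, (n - max a b) : ℕ) : ℝ) /
      n ^ 3) atTop (𝓝 (1 / 3)) := by
  have h0 : Tendsto (fun n : ℕ => 1 / (n : ℝ)) atTop (𝓝 0) :=
    tendsto_one_div_atTop_nhds_zero_nat
  have hlim : Tendsto (fun n : ℕ => (1 + 1 / (n : ℝ)) * (2 + 1 / n) / 6)
      atTop (𝓝 (1 / 3)) := by
    convert ((tendsto_const_nhds.add h0).mul (tendsto_const_nhds.add h0)).div_const 6 using 2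
    norm_num
  refine hlim.congr' ((eventually_ne_atTop 0).mono fun n hn => ?_)
  have h6 : (6 : ℝ) * ((∑ a ∈ range n, ∑ b ∈ range n, (n - max a b) : ℕ) : ℝ)
      = n * (n + 1) * (2 * n + 1) := by exact_mod_cast six_mul_sum_sub_max n
  field_simp
  linear_combination -h6

theorem IsPrimeWord.tendsto_kxSum_wpow_sub_div_cube {η : List Bool} (hη : IsPrimeWord η) :
    Tendsto (fun n : ℕ => ((kxSum (wpow η n) : ℝ) - (η.length : ℝ) ^ 2 *
        ((∑ a ∈ range n, ∑ b ∈ range n, (n - max a b) : ℕ) : ℝ)) / n ^ 3)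
      atTop (𝓝 0) := by
  refine squeeze_zero_norm' ?_ (tendsto_const_div_atTop_nhds_zero_nat ((η.length : ℝ) ^ 3))
  filter_upwards [eventually_ne_atTop 0] with n hn
  have hn : (n : ℝ) ≠ 0 := Nat.cast_ne_zero.2 hn
  rw [Real.norm_eq_abs, abs_div, abs_of_nonneg (by positivity : (0 : ℝ) ≤ n ^ 3)]
  calc _ ≤ (η.length : ℝ) ^ 3 * n ^ 2 / n ^ 3 := by gcongr; exact hη.abs_kxSum_wpow_sub_le n
    _ = η.length ^ 3 / n := by field_simp

theorem kxSum_pow_tendsto_general (η : List Bool) (k : ℕ)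
    (hη : IsPrimeWord η) (hk : η.length = k) :
    Filter.Tendsto (fun n => (kxSum (wpow η n) : ℝ) / (n : ℝ) ^ 3)
      atTop (nhds ((k : ℝ) ^ 2 / 3)) := by
  subst hk
  convert hη.tendsto_kxSum_wpow_sub_div_cube.add
    (tendsto_sum_sub_max_div_cube.const_mul ((η.length : ℝ) ^ 2)) using 1
  · ext n
    ring
  · congr 1
    ring

/-- for a prime word `η` of length `k ≥ 1`,
`lim_{n→∞} Σ(η^n)/n³ = k²/3`. -/
theorem kxSum_pow_tendsto (η : List Bool) (k : ℕ)
    (hη : IsPrimeWord η) (hk : η.length = k) (h1 : 1 ≤ k) :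
    Filter.Tendsto (fun n => (kxSum (wpow η n) : ℝ) / (n : ℝ) ^ 3)
      atTop (nhds ((k : ℝ) ^ 2 / 3)) :=
  kxSum_pow_tendsto_general η k hη hk
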